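/- arXiv:1610.06317 — 3 statements merged into one kernel-verified Lean document; each statement's English description precedes it below -/
import Mathlib

section
/- Suppose r ≥ 0 is such that for every trace τ' ε-equivalent to τ and every x₀' with |x₀' - x₀| ≤ δ, the endpoint of τ' from x₀' is within r of the endpoint of τ from x₀. Let a : X → X with monotone discrepancy function β_a be ε-independent of every action in τ (length n ≥ 1), and let β be a common monotone discrepancy function for the actions in τ. Then r' = β_a(r) + γ_{n-1}(ε) satisfies: for every trace σ ε-equivalent to τ·a and every x₀' with |x₀' - x₀| ≤ δ, the endpoint of σ from x₀' is within r' of the endpoint of τ·a from x₀, where γ_{n-1}(ε) = Σ_{i=0}^{n-1} β^i(ε). -/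
/-!
In a trace `σ` equivalent to `τ ++ [a]` the action `a` sits between two pieces `τ₁`, `τ₂` with
`τ₁ ++ τ₂` equivalent to `τ`, because a swap either moves `a` or swaps two actions of `τ`. Running
`σ` differs from running `τ₁ ++ τ₂ ++ [a]` by the cost of pushing `a` past `τ₂`, at most
`γ_{|τ₂|-1}(ε) ≤ γ_{|τ|-1}(ε)`, and the latter differs from running `τ ++ [a]` from `x₀` by at most
`β_a(r)`.
-/

/-- Apply a trace (finite sequence of actions) from left to right. -/
def applyTrace {S : Type*} (τ : List (S → S)) (x : S) : S :=
  τ.foldl (fun y f => f y) x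

/-- `ε`-independence of two actions on a normed space. -/
def EpsIndep {E : Type*} [NormedAddCommGroup E] (ε : ℝ) (a b : E → E) : Prop :=
  ∀ x : E, ‖a (b x) - b (a x)‖ ≤ ε

/-- One swap of an adjacent pair of `indep`-related actions. -/
def Swap {A : Type*} (indep : A → A → Prop) (τ τ' : List A) : Prop :=
  ∃ (σ η : List A) (a b : A), indep a b ∧ τ = σ ++ a :: b :: η ∧ τ' = σ ++ b :: a :: η

/-- `ε`-equivalence of traces: reflexive-transitive closure of adjacent swaps. -/
def TraceEquiv {A : Type*} (indep : A → A → Prop) : List A → List A → Prop :=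
  Relation.ReflTransGen (Swap indep)

theorem Swap.exists_append_cons {A : Type*} {indep : A → A → Prop} {τ₁ τ₂ σ : List A} {a : A}
    (h : Swap indep (τ₁ ++ a :: τ₂) σ) :
    ∃ τ₁' τ₂', σ = τ₁' ++ a :: τ₂' ∧ TraceEquiv indep (τ₁ ++ τ₂) (τ₁' ++ τ₂') := by
  obtain ⟨ρ, η, c, d, hcd, heq, rfl⟩ := h
  rcases List.append_eq_append_iff.1 heq with ⟨μ, rfl, h⟩ | ⟨μ, rfl, h⟩
  · rcases List.cons_eq_append_iff.1 h with ⟨rfl, h⟩ | ⟨μ, rfl, rfl⟩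
    · obtain ⟨rfl, rfl⟩ := List.cons_eq_cons.1 h
      exact ⟨τ₁ ++ [d], η, by simp, by simpa using .refl⟩
    · exact ⟨τ₁, μ ++ d :: c :: η, by simp, .single ⟨τ₁ ++ μ, η, c, d, hcd, by simp, by simp⟩⟩
  · rcases List.cons_eq_append_iff.1 h with ⟨rfl, h'⟩ | ⟨μ, rfl, h'⟩
    · obtain ⟨rfl, rfl⟩ := List.cons_eq_cons.1 h'
      exact ⟨ρ ++ [d], η, by simp, by simpa using .refl⟩
    · rcases List.cons_eq_append_iff.1 h' with ⟨rfl, h''⟩ | ⟨μ, rfl, rfl⟩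
      · obtain ⟨rfl, rfl⟩ := List.cons_eq_cons.1 h''
        exact ⟨ρ, c :: τ₂, by simp, by simpa using .refl⟩
      · exact ⟨ρ ++ d :: c :: μ, τ₂, by simp, .single ⟨ρ, μ ++ τ₂, c, d, hcd, by simp, by simp⟩⟩

theorem TraceEquiv.exists_append_cons {A : Type*} {indep : A → A → Prop} {τ σ : List A} {a : A}
    (h : TraceEquiv indep (τ ++ [a]) σ) :
    ∃ τ₁ τ₂, σ = τ₁ ++ a :: τ₂ ∧ TraceEquiv indep τ (τ₁ ++ τ₂) := by
  induction h with
  | refl => exact ⟨τ, [], rfl, by simpa using .refl⟩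
  | tail _ hswap ih =>
    obtain ⟨τ₁, τ₂, rfl, hequiv⟩ := ih
    obtain ⟨τ₁', τ₂', rfl, hequiv'⟩ := hswap.exists_append_cons
    exact ⟨τ₁', τ₂', rfl, hequiv.trans hequiv'⟩

theorem TraceEquiv.perm {A : Type*} {indep : A → A → Prop} {τ σ : List A}
    (h : TraceEquiv indep τ σ) : τ.Perm σ := by
  induction h with
  | refl => rfl
  | tail _ hswap ih =>
    obtain ⟨ρ, η, a, b, -, rfl, rfl⟩ := hswap
    exact ih.trans (.append_left ρ (.swap b a η))

@[simp]
theorem applyTrace_nil {S : Type*} (x : S) : applyTrace [] x = x := rfl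

@[simp]
theorem applyTrace_cons {S : Type*} (f : S → S) (τ : List (S → S)) (x : S) :
    applyTrace (f :: τ) x = applyTrace τ (f x) := rfl

@[simp]
theorem applyTrace_append {S : Type*} (τ₁ τ₂ : List (S → S)) (x : S) :
    applyTrace (τ₁ ++ τ₂) x = applyTrace τ₂ (applyTrace τ₁ x) :=
  List.foldl_append

theorem dist_applyTrace_le {S : Type*} [PseudoMetricSpace S] {β : ℝ → ℝ} (hβ : Monotone β)
    {τ : List (S → S)} (hτ : ∀ f ∈ τ, ∀ x x', dist (f x) (f x') ≤ β (dist x x')) (x x' : S) :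
    dist (applyTrace τ x) (applyTrace τ x') ≤ β^[τ.length] (dist x x') := by
  induction τ generalizing x x' with
  | nil => simp
  | cons f τ ih =>
    simp only [applyTrace_cons, List.length_cons, Function.iterate_succ_apply]
    exact (ih (fun g hg => hτ g (.tail f hg)) _ _).trans
      (hβ.iterate _ (hτ f List.mem_cons_self x x'))

/-- Pushing `a` from the front to the back of `τ` costs `ε` at each action of `τ`, and the cost
incurred at the `i`-th action from the end is then propagated by the `i` remaining actions. -/
theorem norm_applyTrace_sub_le_sum {E : Type*} [NormedAddCommGroup E] {ε : ℝ} {β : ℝ → ℝ}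
    (hβ : Monotone β) {τ : List (E → E)} {a : E → E}
    (hτ : ∀ f ∈ τ, ∀ x x', ‖f x - f x'‖ ≤ β ‖x - x'‖) (hind : ∀ f ∈ τ, EpsIndep ε f a) (x : E) :
    ‖applyTrace τ (a x) - a (applyTrace τ x)‖ ≤ ∑ i ∈ Finset.range τ.length, β^[i] ε := by
  induction τ generalizing x with
  | nil => simp
  | cons f τ ih =>
    have hτ' : ∀ g ∈ τ, ∀ x x', dist (g x) (g x') ≤ β (dist x x') := fun g hg => by
      simpa only [dist_eq_norm] using hτ g (.tail f hg)
    have hswap : ‖applyTrace τ (f (a x)) - applyTrace τ (a (f x))‖ ≤ β^[τ.length] ε := by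
      simpa only [dist_eq_norm] using (dist_applyTrace_le hβ hτ' _ _).trans
        (hβ.iterate _ ((dist_eq_norm _ _).trans_le (hind f List.mem_cons_self x)))
    have hpush := ih (fun g hg => hτ g (.tail f hg)) (fun g hg => hind g (.tail f hg)) (f x)
    simp only [applyTrace_cons, List.length_cons, Finset.sum_range_succ]
    calc ‖applyTrace τ (f (a x)) - a (applyTrace τ (f x))‖
        ≤ ‖applyTrace τ (f (a x)) - applyTrace τ (a (f x))‖
          + ‖applyTrace τ (a (f x)) - a (applyTrace τ (f x))‖ :=
            norm_sub_le_norm_sub_add_norm_sub _ _ _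
      _ ≤ ∑ i ∈ Finset.range τ.length, β^[i] ε + β^[τ.length] ε := by linarith

theorem stmt7_general {E : Type*} [NormedAddCommGroup E] (ε δ r : ℝ) (hε : 0 ≤ ε)
    (τ : List (E → E)) (a : E → E) (x₀ : E)
    (β βa : ℝ → ℝ) (hβmono : Monotone β) (hβ0 : ∀ d : ℝ, 0 ≤ β d)
    (hβamono : Monotone βa)
    (hβ : ∀ c ∈ τ, ∀ x x' : E, ‖c x - c x'‖ ≤ β ‖x - x'‖)
    (hβa : ∀ x x' : E, ‖a x - a x'‖ ≤ βa ‖x - x'‖)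
    (hind : ∀ c ∈ τ, EpsIndep ε c a)
    (hr : ∀ τ', TraceEquiv (EpsIndep ε) τ τ' → ∀ x₀' : E, ‖x₀' - x₀‖ ≤ δ →
      ‖applyTrace τ' x₀' - applyTrace τ x₀‖ ≤ r) :
    ∀ σ, TraceEquiv (EpsIndep ε) (τ ++ [a]) σ → ∀ x₀' : E, ‖x₀' - x₀‖ ≤ δ →
      ‖applyTrace σ x₀' - applyTrace (τ ++ [a]) x₀‖ ≤
        βa r + ∑ i ∈ Finset.range τ.length, β^[i] ε := by
  intro σ hσ x₀' hx₀'
  obtain ⟨τ₁, τ₂, rfl, hequiv⟩ := hσ.exists_append_cons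
  have hperm := hequiv.perm
  have hτ₂ : ∀ c ∈ τ₂, c ∈ τ := fun c hc => hperm.mem_iff.2 (List.mem_append_right τ₁ hc)
  set y := applyTrace τ₁ x₀'
  have hpush := norm_applyTrace_sub_le_sum hβmono (fun c hc => hβ c (hτ₂ c hc))
    (fun c hc => hind c (hτ₂ c hc)) y
  have hend : ‖a (applyTrace τ₂ y) - a (applyTrace τ x₀)‖ ≤ βa r :=
    (hβa _ _).trans (hβamono (by simpa [y] using hr _ hequiv x₀' hx₀'))
  have hsum : ∑ i ∈ Finset.range τ₂.length, β^[i] ε ≤ ∑ i ∈ Finset.range τ.length, β^[i] ε := by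
    refine Finset.sum_le_sum_of_subset_of_nonneg (Finset.range_subset_range.2 ?_) ?_
    · simp [hperm.length_eq]
    · rintro (_ | i) - -
      exacts [hε, (Function.iterate_succ_apply' β i ε).trans_ge (hβ0 _)]
  simp only [applyTrace_append, applyTrace_cons, applyTrace_nil]
  calc ‖applyTrace τ₂ (a y) - a (applyTrace τ x₀)‖
      ≤ ‖applyTrace τ₂ (a y) - a (applyTrace τ₂ y)‖
        + ‖a (applyTrace τ₂ y) - a (applyTrace τ x₀)‖ := norm_sub_le_norm_sub_add_norm_sub _ _ _
    _ ≤ βa r + ∑ i ∈ Finset.range τ.length, β^[i] ε := by linarith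

/-- Inductive step for the `(δ,ε)`-trace-equivalent discrepancy: if `r` is a ted for
`ξ_{x₀,τ}` and `a` is `ε`-independent of every action of `τ`, then
`β_a(r) + γ_{len(τ)-1}(ε)` is a ted for `ξ_{x₀, τ·a}`. -/
theorem stmt7 {E : Type*} [NormedAddCommGroup E] (ε δ r : ℝ) (hε : 0 ≤ ε)
    (τ : List (E → E)) (hτ : 1 ≤ τ.length) (a : E → E) (x₀ : E)
    (β βa : ℝ → ℝ) (hβmono : Monotone β) (hβ0 : ∀ d : ℝ, 0 ≤ β d)
    (hβamono : Monotone βa)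
    (hβ : ∀ c ∈ τ, ∀ x x' : E, ‖c x - c x'‖ ≤ β ‖x - x'‖)
    (hβa : ∀ x x' : E, ‖a x - a x'‖ ≤ βa ‖x - x'‖)
    (hind : ∀ c ∈ τ, EpsIndep ε c a)
    (hr : ∀ τ', TraceEquiv (EpsIndep ε) τ τ' → ∀ x₀' : E, ‖x₀' - x₀‖ ≤ δ →
      ‖applyTrace τ' x₀' - applyTrace τ x₀‖ ≤ r) :
    ∀ σ, TraceEquiv (EpsIndep ε) (τ ++ [a]) σ → ∀ x₀' : E, ‖x₀' - x₀‖ ≤ δ →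
      ‖applyTrace σ x₀' - applyTrace (τ ++ [a]) x₀‖ ≤
        βa r + ∑ i ∈ Finset.range τ.length, β^[i] ε :=
  stmt7_general ε δ r hε τ a x₀ β βa hβmono hβ0 hβamono hβ hβa hind hr
end

section
/- Greedy characterization of the earliest equivalent position: assume all actions in τ·a are pairwise distinct and ε-independence is symmetric. Let φ be the subsequence of τ obtained by scanning τ from right to left and keeping τ(t) iff it fails to be ε-independent of some element of the current φ·a. Then len(φ) = eep(τ, a, ε), the minimum over all τ' ≡_ε τ·a of the last position of a in τ'. -/
/-- `k` is the last position of `a` in `τ`. -/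
def IsLastPos {A : Type*} (τ : List A) (a : A) (k : ℕ) : Prop :=
  τ[k]? = some a ∧ ∀ j : ℕ, τ[j]? = some a → j ≤ k

open Classical in
/-- Scan `τ` from right to left, keeping `τ(t)` iff it fails to be independent of some
element of the current `φ·a`. -/
noncomputable def greedy {A : Type*} (indep : A → A → Prop) (a : A) (τ : List A) :
    List A :=
  τ.reverse.foldl (fun φ t => if ∃ b ∈ φ ++ [a], ¬ indep t b then t :: φ else φ) []

/-!
A swap exchanges two adjacent independent actions, so it never reorders a dependent pair:
if `x` depends on `y` and occurs before it, it still does in every equivalent trace. Every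
action kept by the greedy scan depends on a later kept action or on `a`, so by distinctness
all of `φ` stays before `a` in every equivalent trace, and `a` sits at position at least
`len φ`. Conversely, each discarded action is independent of everything in the current `φ·a`
and can be bubbled to the right past it, which produces `φ·a·ψ ≡ τ·a`.
-/

open List Relation

namespace List

variable {A : Type*}

theorem Nodup.pair_sublist_trans {l : List A} (hl : l.Nodup) {x y z : A}
    (hxy : [x, y] <+ l) (hyz : [y, z] <+ l) : [x, z] <+ l := by
  induction l with
  | nil => simp at hxy
  | cons c l ih =>
    obtain ⟨hc, hl⟩ := nodup_cons.mp hl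
    rw [sublist_cons_iff] at hxy hyz
    rcases hyz with hyz | ⟨_, ⟨rfl, rfl⟩, -⟩
    · rcases hxy with hxy | ⟨_, ⟨rfl, rfl⟩, -⟩
      · exact (ih hl hxy hyz).cons c
      · exact (singleton_sublist.mpr (hyz.subset (by simp))).cons_cons x
    · rcases hxy with hxy | ⟨_, ⟨rfl, rfl⟩, hy⟩
      · exact absurd (hxy.subset (by simp)) hc
      · exact absurd (singleton_sublist.mp hy) hc

end List

section Swap

variable {A : Type*} {indep : A → A → Prop}

theorem Swap.perm {l l' : List A} (h : Swap indep l l') : l.Perm l' := by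
  obtain ⟨σ, η, p, q, -, rfl, rfl⟩ := h
  exact (Perm.swap q p η).append_left σ

theorem Relation.ReflTransGen.swap_perm {l l' : List A} (h : ReflTransGen (Swap indep) l l') :
    l.Perm l' := by
  induction h with
  | refl => rfl
  | tail _ h ih => exact ih.trans h.perm

theorem Swap.cons {l l' : List A} (c : A) (h : Swap indep l l') :
    Swap indep (c :: l) (c :: l') := by
  obtain ⟨σ, η, p, q, hpq, rfl, rfl⟩ := h
  exact ⟨c :: σ, η, p, q, hpq, rfl, rfl⟩

theorem Relation.ReflTransGen.swap_cons {l l' : List A} (c : A)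
    (h : ReflTransGen (Swap indep) l l') :
    ReflTransGen (Swap indep) (c :: l) (c :: l') :=
  h.lift (c :: ·) fun _ _ => Swap.cons c

theorem reflTransGen_swap_cons_append {t : A} {L M : List A} (h : ∀ b ∈ L, indep t b) :
    ReflTransGen (Swap indep) (t :: (L ++ M)) (L ++ t :: M) := by
  induction L with
  | nil => exact ReflTransGen.refl
  | cons b L ih =>
    refine ReflTransGen.head ⟨[], L ++ M, t, b, h b (by simp), rfl, rfl⟩ ?_
    exact ReflTransGen.swap_cons b (ih fun c hc => h c (by simp [hc]))

theorem Swap.pair_sublist {l l' : List A} (h : Swap indep l l') {x y : A}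
    (hxy : ¬ indep x y) (hl : [x, y] <+ l) : [x, y] <+ l' := by
  obtain ⟨σ, η, p, q, hpq, rfl, rfl⟩ := h
  induction σ with
  | nil =>
    simp only [nil_append, sublist_cons_iff, cons.injEq] at hl ⊢
    rcases hl with (h | ⟨_, ⟨rfl, rfl⟩, h⟩) | ⟨_, ⟨rfl, rfl⟩, h | ⟨_, hyq, -⟩⟩
    · exact .inl (.inl h)
    · exact .inr ⟨_, ⟨rfl, rfl⟩, .inl h⟩
    · exact .inl (.inr ⟨_, ⟨rfl, rfl⟩, h⟩)
    · -- `(x, y) = (p, q)` is the only pair the swap reverses, and it is independent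
      obtain ⟨rfl, -⟩ := cons.inj hyq
      exact absurd hpq hxy
  | cons c σ ih =>
    simp only [cons_append, sublist_cons_iff] at hl ⊢
    rcases hl with hl | ⟨_, ⟨rfl, rfl⟩, hy⟩
    · exact .inl (ih hl)
    · refine .inr ⟨_, rfl, ?_⟩
      simp only [singleton_sublist, mem_append, mem_cons] at hy ⊢
      tauto

theorem Relation.ReflTransGen.swap_pair_sublist {l l' : List A}
    (h : ReflTransGen (Swap indep) l l') {x y : A} (hxy : ¬ indep x y) (hl : [x, y] <+ l) :
    [x, y] <+ l' := by
  induction h with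
  | refl => exact hl
  | tail _ h ih => exact h.pair_sublist hxy ih

end Swap

theorem IsLastPos.of_append_cons {A : Type*} {G ψ : List A} {a : A} (ha : a ∉ ψ) :
    IsLastPos (G ++ a :: ψ) a G.length := by
  refine ⟨by simp, fun j hj => ?_⟩
  by_contra! hlt
  obtain ⟨i, rfl⟩ := Nat.exists_eq_add_of_lt hlt
  rw [getElem?_append_right (by omega), show G.length + i + 1 - G.length = i + 1 by omega,
    getElem?_cons_succ] at hj
  exact ha (mem_of_getElem? hj)

theorem IsLastPos.length_le {A : Type*} {l G : List A} {a : A} {k : ℕ}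
    (hk : IsLastPos l a k) (hG : G.Nodup) (hpre : ∀ x ∈ G, [x, a] <+ l) :
    G.length ≤ k := by
  have hsub : G ⊆ l.take k := by
    intro x hx
    obtain ⟨r₁, r₂, rfl, hx, ha⟩ := cons_sublist_iff.mp (hpre x hx)
    obtain ⟨i, hi⟩ := mem_iff_getElem?.mp (singleton_sublist.mp ha)
    have hle : r₁.length + i ≤ k := hk.2 _ (by rwa [getElem?_append_right (by omega),
      Nat.add_sub_cancel_left])
    have hx' : x ∈ (r₁ ++ r₂).take r₁.length := by rwa [take_left]
    exact take_subset_take_left _ (by omega) hx'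
  exact (subperm_of_subset hG hsub).length_le.trans (length_take_le _ _)

section Greedy

variable {A : Type*} (indep : A → A → Prop) (a : A)

theorem greedy_nil : greedy indep a [] = [] := rfl

open Classical in
theorem greedy_cons (t : A) (τ : List A) :
    greedy indep a (t :: τ) =
      if ∃ b ∈ greedy indep a τ ++ [a], ¬ indep t b then t :: greedy indep a τ
      else greedy indep a τ := by
  simp [greedy, foldl_append]

theorem greedy_sublist (τ : List A) : greedy indep a τ <+ τ := by
  induction τ with
  | nil => exact Sublist.slnil
  | cons t τ ih =>
    rw [greedy_cons]
    split
    · exact ih.cons_cons t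
    · exact ih.cons t

theorem exists_reflTransGen_swap_greedy_append (τ : List A) :
    ∃ ψ, ReflTransGen (Swap indep) (τ ++ [a]) (greedy indep a τ ++ a :: ψ) := by
  induction τ with
  | nil => exact ⟨[], ReflTransGen.refl⟩
  | cons t τ ih =>
    obtain ⟨ψ, hψ⟩ := ih
    have ht : ReflTransGen (Swap indep) (t :: τ ++ [a]) (t :: (greedy indep a τ ++ a :: ψ)) :=
      ReflTransGen.swap_cons t hψ
    rw [greedy_cons]
    split_ifs with hdep
    · exact ⟨ψ, ht⟩
    · push Not at hdep
      refine ⟨t :: ψ, ht.trans ?_⟩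
      simpa using reflTransGen_swap_cons_append (M := ψ) hdep

theorem pair_sublist_of_mem_greedy {τ l : List A} (hl : l.Nodup)
    (hdep : ∀ u v, ¬ indep u v → [u, v] <+ τ ++ [a] → [u, v] <+ l)
    {x : A} (hx : x ∈ greedy indep a τ) : [x, a] <+ l := by
  induction τ generalizing x with
  | nil => simp [greedy_nil] at hx
  | cons t τ ih =>
    have hdep' : ∀ u v, ¬ indep u v → [u, v] <+ τ ++ [a] → [u, v] <+ l :=
      fun u v huv h => hdep u v huv (h.cons t)
    rw [greedy_cons] at hx
    split_ifs at hx with hkeep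
    · rcases mem_cons.mp hx with rfl | hx
      · obtain ⟨b, hb, htb⟩ := hkeep
        have hb' : b ∈ τ ++ [a] := ((greedy_sublist indep a τ).append_right [a]).subset hb
        have hxb : [x, b] <+ l := hdep x b htb ((singleton_sublist.mpr hb').cons_cons x)
        rcases mem_append.mp hb with hb | hb
        · exact hl.pair_sublist_trans hxb (ih hdep' hb)
        · rwa [mem_singleton.mp hb] at hxb
      · exact ih hdep' hx
    · exact ih hdep' hx

end Greedy

theorem stmt17_general {A : Type*} (indep : A → A → Prop)
    (τ : List A) (a : A)
    (hnodup : (τ ++ [a]).Nodup) :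
    (greedy indep a τ).length =
      sInf {k : ℕ | ∃ τ', Relation.ReflTransGen (Swap indep) (τ ++ [a]) τ' ∧
        IsLastPos τ' a k} := by
  obtain ⟨ψ, hψ⟩ := exists_reflTransGen_swap_greedy_append indep a τ
  have hψa : a ∉ ψ :=
    (nodup_cons.mp (hψ.swap_perm.nodup_iff.mp hnodup).of_append_right).1
  have hlast := IsLastPos.of_append_cons (G := greedy indep a τ) hψa
  refine le_antisymm (le_csInf ⟨_, _, hψ, hlast⟩ ?_) (Nat.sInf_le ⟨_, hψ, hlast⟩)
  rintro k ⟨τ', hτ', hk⟩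
  have hτ'nodup := hτ'.swap_perm.nodup_iff.mp hnodup
  have hGnodup := (greedy_sublist indep a τ).nodup hnodup.of_append_left
  exact hk.length_le hGnodup fun x hx =>
    pair_sublist_of_mem_greedy indep a hτ'nodup (fun _ _ huv h => hτ'.swap_pair_sublist huv h) hx

/-- Greedy characterization of the earliest equivalent position: the length of the
greedily constructed `φ` equals `eep(τ,a,ε)`, the minimum over `τ' ≡_ε τ·a` of the
last position of `a` in `τ'`. -/
theorem stmt17 {A : Type*} (indep : A → A → Prop) (hsymm : Symmetric indep)
    (hirr : ∀ x : A, ¬ indep x x) (τ : List A) (a : A)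
    (hnodup : (τ ++ [a]).Nodup) :
    (greedy indep a τ).length =
      sInf {k : ℕ | ∃ τ', Relation.ReflTransGen (Swap indep) (τ ++ [a]) τ' ∧
        IsLastPos τ' a k} :=
  stmt17_general indep τ a hnodup
end

section
/- If in a trace τ' ≡_ε τ (obtained from τ by swaps of adjacent ε-independent actions) two actions b and c are not ε-independent and b ≠ c, and in τ the (unique) occurrence of c precedes that of b, then in τ' the occurrence of c also precedes that of b (relative order of non-independent distinct actions is preserved under ε-equivalence). -/
/-! `l.idxOf c < l.idxOf b` says that `c` occurs in `l` before the first `b`, a property read off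
the list from the left, one entry at a time. Swapping an adjacent pair `a, a'` can only break it
when `c = a` and `b = a'`, which is excluded because `a, a'` are independent while `c, b` are not. -/

namespace List

variable {A : Type*} [DecidableEq A] {b c : A}

theorem idxOf_lt_idxOf_cons_iff (hbc : b ≠ c) (x : A) (l : List A) :
    (x :: l).idxOf c < (x :: l).idxOf b ↔ x = c ∨ x ≠ b ∧ l.idxOf c < l.idxOf b := by
  by_cases hxc : x = c
  · subst hxc
    simp [idxOf_cons_ne _ (Ne.symm hbc)]
  · by_cases hxb : x = b
    · subst hxb
      simp [hxc]
    · simp [idxOf_cons_ne _ hxc, idxOf_cons_ne _ hxb, hxc, hxb]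

theorem idxOf_lt_idxOf_append_left (hbc : b ≠ c) {l l' : List A}
    (h : l.idxOf c < l.idxOf b → l'.idxOf c < l'.idxOf b) (σ : List A) :
    (σ ++ l).idxOf c < (σ ++ l).idxOf b → (σ ++ l').idxOf c < (σ ++ l').idxOf b := by
  induction σ with
  | nil => exact h
  | cons x σ ih =>
    simp only [cons_append, idxOf_lt_idxOf_cons_iff hbc]
    exact Or.imp_right (And.imp_right ih)

end List

section

variable {A : Type*} [DecidableEq A] {indep : A → A → Prop} {b c : A}

theorem idxOf_lt_idxOf_of_swap (hbc : b ≠ c) (hnind : ¬ indep c b)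
    {τ τ' : List A} (hswap : Swap indep τ τ') (horder : τ.idxOf c < τ.idxOf b) :
    τ'.idxOf c < τ'.idxOf b := by
  obtain ⟨σ, η, a, a', hindep, rfl, rfl⟩ := hswap
  refine List.idxOf_lt_idxOf_append_left hbc (fun h => ?_) σ horder
  simp only [List.idxOf_lt_idxOf_cons_iff hbc] at h ⊢
  rcases h with rfl | ⟨hab, rfl | ⟨ha'b, hη⟩⟩
  · have ha'b : a' ≠ b := by
      rintro rfl
      exact hnind hindep
    exact Or.inr ⟨ha'b, Or.inl rfl⟩
  · exact Or.inl rfl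
  · exact Or.inr ⟨ha'b, Or.inr ⟨hab, hη⟩⟩

end

theorem stmt18_general {A : Type*} [DecidableEq A] (indep : A → A → Prop)
    (hsymm : Symmetric indep)
    (τ τ' : List A) (b c : A)
    (hbc : b ≠ c) (hnind : ¬ indep b c)
    (horder : τ.idxOf c < τ.idxOf b)
    (hequiv : Relation.ReflTransGen (Swap indep) τ τ') :
    τ'.idxOf c < τ'.idxOf b := by
  induction hequiv with
  | refl => exact horder
  | tail _ hswap ih => exact idxOf_lt_idxOf_of_swap hbc (fun h => hnind (hsymm h)) hswap ih

/-- The relative order of two distinct, non-independent actions is preserved under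
`ε`-equivalence of traces (all actions in `τ` distinct). -/
theorem stmt18 {A : Type*} [DecidableEq A] (indep : A → A → Prop)
    (hsymm : Symmetric indep) (hirr : ∀ x : A, ¬ indep x x)
    (τ τ' : List A) (hnodup : τ.Nodup) (b c : A)
    (hb : b ∈ τ) (hc : c ∈ τ) (hbc : b ≠ c) (hnind : ¬ indep b c)
    (horder : τ.idxOf c < τ.idxOf b)
    (hequiv : Relation.ReflTransGen (Swap indep) τ τ') :
    τ'.idxOf c < τ'.idxOf b :=
  stmt18_general indep hsymm τ τ' b c hbc hnind horder hequiv
end
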